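/- Let G be a finite group acting on finite sets S and T, let A be a G-covariant stochastic map from distributions on S to distributions on T (i.e., A(P^g) = (A P)^g for all g ∈ G and all distributions P). Then the reference information is non-increasing: I_G(A P) ≤ I_G(P) for every distribution P on S. -/

import Mathlib

open Finset

/-- Shannon entropy (base 2). -/
noncomputable def entH {S : Type*} [Fintype S] (P : S → ℝ) : ℝ :=
  -∑ s, P s * Real.logb 2 (P s)

/-- Reference information of a distribution P with respect to a finite group
action: I_G(P) = H((1/|G|)∑_g P^g) - H(P). -/
noncomputable def refInfo (G : Type*) {S : Type*} [Group G] [Fintype G]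
    [Fintype S] [MulAction G S] (P : S → ℝ) : ℝ :=
  entH (fun s => (1 / (Fintype.card G : ℝ)) * ∑ g : G, P (g⁻¹ • s)) - entH P

/-!
`I_G(P)` is the mutual information between a uniform `g ∈ G` and a sample of `P^g`: since every
translate `P^g` has entropy `H(P)`, it equals the average relative entropy
`(1/|G|) ∑_g D(P^g ‖ M)` of the translates to their uniform mixture `M`. Covariance turns `A(P^g)`
into `(AP)^g`, and by linearity `A M` into the mixture of the `(AP)^g`, so each term can only
decrease by the data processing inequality `D(Ap ‖ Aq) ≤ D(p ‖ q)`, which in turn is the log-sum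
inequality applied to each output coordinate.
-/

open Real
open scoped Matrix

section RelativeEntropy

variable {ι : Type*} [Fintype ι]

/-- Relative entropy in nats. Since `log 0 = 0`, a term with `q i = 0 < p i` contributes `0`
rather than `∞`, so the lemmas below assume `q i = 0 → p i = 0`. -/
noncomputable def relEntropy (p q : ι → ℝ) : ℝ :=
  ∑ i, p i * log (p i / q i)

lemma sub_le_mul_log_div {a c : ℝ} (ha : 0 ≤ a) (hc : 0 ≤ c) (hac : c = 0 → a = 0) :
    a - c ≤ a * log (a / c) := by
  rcases ha.eq_or_lt with rfl | ha
  · simpa using hc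
  have hc : 0 < c := hc.lt_of_ne fun h => ha.ne' (hac h.symm)
  have hlog := one_sub_inv_le_log_of_pos (div_pos ha hc)
  rw [inv_div] at hlog
  calc a - c = a * (1 - c / a) := by field_simp
    _ ≤ a * log (a / c) := mul_le_mul_of_nonneg_left hlog ha.le

/-- The log-sum inequality. -/
theorem sum_mul_log_div_sum_le (a b : ι → ℝ) (ha : ∀ i, 0 ≤ a i) (hb : ∀ i, 0 ≤ b i)
    (hab : ∀ i, b i = 0 → a i = 0) :
    (∑ i, a i) * log ((∑ i, a i) / ∑ i, b i) ≤ ∑ i, a i * log (a i / b i) := by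
  set A := ∑ i, a i
  set B := ∑ i, b i
  rcases (show 0 ≤ A from sum_nonneg fun i _ => ha i).eq_or_lt with hA | hA
  · have ha0 : ∀ i, a i = 0 := fun i =>
      (sum_eq_zero_iff_of_nonneg fun i _ => ha i).mp hA.symm i (mem_univ i)
    simp [← hA, ha0]
  have hB : 0 < B := (sum_nonneg fun i _ => hb i).lt_of_ne fun hB => hA.ne' <| sum_eq_zero
    fun i _ => hab i ((sum_eq_zero_iff_of_nonneg fun i _ => hb i).mp hB.symm i (mem_univ i))
  set r := A / B
  have hr : 0 < r := div_pos hA hB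
  -- compare `a i` with the rescaled `b i * r`, which has the same total mass `A`
  have hterm : ∀ i, a i - b i * r + a i * log r ≤ a i * log (a i / b i) := by
    intro i
    rcases (ha i).eq_or_lt with hai | hai
    · simp [← hai, mul_nonneg (hb i) hr.le]
    have hbi : 0 < b i := (hb i).lt_of_ne fun h => hai.ne' (hab i h.symm)
    have := sub_le_mul_log_div (ha i) (mul_nonneg (hb i) hr.le) fun h => by
      nlinarith [mul_pos hbi hr]
    rw [← div_div, log_div (div_pos hai hbi).ne' hr.ne'] at this
    linarith
  calc A * log r = ∑ i, (a i - b i * r + a i * log r) := by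
        rw [sum_add_distrib, sum_sub_distrib, ← sum_mul, ← sum_mul, mul_div_cancel₀ A hB.ne']
        ring
    _ ≤ ∑ i, a i * log (a i / b i) := sum_le_sum fun i _ => hterm i

theorem relEntropy_mulVec_le {S T : Type*} [Fintype S] [Fintype T] (A : Matrix T S ℝ)
    (hA0 : ∀ t s, 0 ≤ A t s) (hA1 : ∀ s, ∑ t, A t s = 1) {p q : S → ℝ}
    (hp : ∀ s, 0 ≤ p s) (hq : ∀ s, 0 ≤ q s) (hpq : ∀ s, q s = 0 → p s = 0) :
    relEntropy (A *ᵥ p) (A *ᵥ q) ≤ relEntropy p q := by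
  have hrow : ∀ t, (A *ᵥ p) t * log ((A *ᵥ p) t / (A *ᵥ q) t) ≤
      ∑ s, A t s * (p s * log (p s / q s)) := by
    intro t
    refine (sum_mul_log_div_sum_le (fun s => A t s * p s) (fun s => A t s * q s)
      (fun s => mul_nonneg (hA0 t s) (hp s)) (fun s => mul_nonneg (hA0 t s) (hq s))
      fun s hs => ?_).trans_eq (sum_congr rfl fun s _ => ?_)
    · rcases mul_eq_zero.mp hs with h | h <;> simp [h, hpq]
    · by_cases h : A t s = 0
      · simp [h]
      · rw [mul_div_mul_left _ _ h, mul_assoc]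
  calc relEntropy (A *ᵥ p) (A *ᵥ q) ≤ ∑ t, ∑ s, A t s * (p s * log (p s / q s)) :=
        sum_le_sum fun t _ => hrow t
    _ = relEntropy p q := by
        rw [sum_comm]
        simp only [← sum_mul, hA1, one_mul, relEntropy]

end RelativeEntropy

section UniformMixture

variable {ι S : Type*} [Fintype ι]

noncomputable def uniformMixture (p : ι → S → ℝ) : S → ℝ :=
  fun s => (1 / (Fintype.card ι : ℝ)) * ∑ i, p i s

lemma uniformMixture_eq_smul_sum (p : ι → S → ℝ) :
    uniformMixture p = (1 / (Fintype.card ι : ℝ)) • ∑ i, p i := by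
  ext s
  simp [uniformMixture, Finset.sum_apply]

lemma uniformMixture_nonneg {p : ι → S → ℝ} (hp : ∀ i s, 0 ≤ p i s) (s : S) :
    0 ≤ uniformMixture p s :=
  mul_nonneg (by positivity) (sum_nonneg fun i _ => hp i s)

lemma eq_zero_of_uniformMixture_eq_zero {p : ι → S → ℝ} (hp : ∀ i s, 0 ≤ p i s) {s : S}
    (hs : uniformMixture p s = 0) (i : ι) : p i s = 0 := by
  have : Nonempty ι := ⟨i⟩
  have hsum : ∑ j, p j s = 0 := by simpa [uniformMixture, Fintype.card_ne_zero] using hs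
  exact (sum_eq_zero_iff_of_nonneg fun j _ => hp j s).mp hsum i (mem_univ i)

lemma mulVec_uniformMixture {T : Type*} [Fintype S] (A : Matrix T S ℝ) (p : ι → S → ℝ) :
    A *ᵥ uniformMixture p = uniformMixture fun i => A *ᵥ p i := by
  rw [uniformMixture_eq_smul_sum, uniformMixture_eq_smul_sum, Matrix.mulVec_smul,
    Matrix.mulVec_sum]

theorem sum_relEntropy_uniformMixture [Fintype S] (p : ι → S → ℝ) (hp : ∀ i s, 0 ≤ p i s) :
    (1 / (Fintype.card ι : ℝ)) * ∑ i, relEntropy (p i) (uniformMixture p) =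
      ∑ s, negMulLog (uniformMixture p s) -
        (1 / (Fintype.card ι : ℝ)) * ∑ i, ∑ s, negMulLog (p i s) := by
  set M := uniformMixture p
  have hterm : ∀ i s, p i s * log (p i s / M s) = -negMulLog (p i s) - p i s * log (M s) := by
    intro i s
    rcases (hp i s).eq_or_lt with h | h
    · simp [← h]
    have hM : M s ≠ 0 := fun hM => h.ne' (eq_zero_of_uniformMixture_eq_zero hp hM i)
    rw [log_div h.ne' hM, negMulLog]
    ring
  have hcross : (1 / (Fintype.card ι : ℝ)) * ∑ i, ∑ s, p i s * log (M s) =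
      ∑ s, M s * log (M s) := by
    rw [sum_comm, mul_sum]
    exact sum_congr rfl fun s _ => by rw [← sum_mul, ← mul_assoc]; rfl
  simp only [relEntropy, hterm, sum_sub_distrib, mul_sub, hcross, sum_neg_distrib, negMulLog,
    neg_mul, neg_neg]
  ring

end UniformMixture

lemma entH_eq_sum_negMulLog {S : Type*} [Fintype S] (P : S → ℝ) :
    entH P = (∑ s, negMulLog (P s)) / log 2 := by
  simp only [entH, negMulLog, logb, sum_div, ← sum_neg_distrib]
  exact sum_congr rfl fun s _ => by ring

theorem refInfo_eq_sum_relEntropy (G : Type*) {S : Type*} [Group G] [Fintype G] [Fintype S]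
    [MulAction G S] {P : S → ℝ} (hP : ∀ s, 0 ≤ P s) :
    refInfo G P = (1 / (Fintype.card G : ℝ)) *
      (∑ g : G, relEntropy (fun s => P (g⁻¹ • s)) (uniformMixture fun (g : G) s => P (g⁻¹ • s))) /
        log 2 := by
  have hinv : ∀ g : G, ∑ s, negMulLog (P (g⁻¹ • s)) = ∑ s, negMulLog (P s) := fun g =>
    Equiv.sum_comp (MulAction.toPerm g⁻¹) fun s => negMulLog (P s)
  rw [show refInfo G P = entH (uniformMixture fun (g : G) s => P (g⁻¹ • s)) - entH P from rfl,
    entH_eq_sum_negMulLog, entH_eq_sum_negMulLog,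
    sum_relEntropy_uniformMixture (fun (g : G) s => P (g⁻¹ • s)) fun g s => hP _]
  simp only [hinv, sum_const, card_univ, nsmul_eq_mul]
  field_simp

/-- The reference information is non-increasing under G-covariant
stochastic maps. -/
theorem reference_information_monotone
    {G S T : Type*} [Group G] [Fintype G] [Fintype S] [Fintype T]
    [MulAction G S] [MulAction G T]
    (A : Matrix T S ℝ)
    (hA0 : ∀ t s, 0 ≤ A t s) (hA1 : ∀ s, ∑ t, A t s = 1)
    (hcov : ∀ (g : G) (P : S → ℝ), (∀ s, 0 ≤ P s) → ∑ s, P s = 1 →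
      (fun t => A.mulVec P (g⁻¹ • t)) = A.mulVec (fun s => P (g⁻¹ • s)))
    (P : S → ℝ) (hP0 : ∀ s, 0 ≤ P s) (hP1 : ∑ s, P s = 1) :
    refInfo G (A.mulVec P) ≤ refInfo G P := by
  have hAP0 : ∀ t, 0 ≤ (A *ᵥ P) t := fun t => sum_nonneg fun s _ => mul_nonneg (hA0 t s) (hP0 s)
  have hPg0 : ∀ (g : G) s, 0 ≤ P (g⁻¹ • s) := fun g s => hP0 _
  rw [refInfo_eq_sum_relEntropy G hAP0, refInfo_eq_sum_relEntropy G hP0]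
  have hAPg : (fun (g : G) t => (A *ᵥ P) (g⁻¹ • t)) = fun g => A *ᵥ fun s => P (g⁻¹ • s) :=
    funext fun g => hcov g P hP0 hP1
  rw [hAPg, ← mulVec_uniformMixture]
  simp only [(hcov · P hP0 hP1)]
  gcongr with g
  exact relEntropy_mulVec_le A hA0 hA1 (hPg0 g) (uniformMixture_nonneg hPg0)
    fun s hs => eq_zero_of_uniformMixture_eq_zero hPg0 hs g
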